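/- arXiv:1412.2646 — 2 statements merged into one kernel-verified Lean document; each statement's English description precedes it below -/
import Mathlib

section
/- Let μ : E → ℝ be a bounded measurable function with essential sup norm at most C_μ, and let k ≥ 0 be an integer. Then for all p, q ∈ L²(E;ℝ) one has the estimate (μ p, q)_{L²(E)} − (μ · Π⁰_k p, Π⁰_k q)_{L²(E)} ≤ ℰ_k(μ p) · ℰ_k(q) + ℰ_k(μ q) · ℰ_k(p) + C_μ · ℰ_k(p) · ℰ_k(q). -/
open MeasureTheory
open scoped RealInnerProductSpace

noncomputable section

abbrev Plane := EuclideanSpace ℝ (Fin 2)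

/-- `f` is (the restriction of) a real polynomial function on `ℝ²` of total degree at most `m`. -/
def IsPolyDeg (m : ℕ) (f : Plane → ℝ) : Prop :=
  ∃ P : MvPolynomial (Fin 2) ℝ, P.totalDegree ≤ m ∧ ∀ x, f x = MvPolynomial.eval (fun i => x i) P

/-- `Pf` is the `L²(E)`-orthogonal projection of `f` onto the space of polynomial
functions of total degree `≤ m`: it is such a polynomial and the error is
`L²(E)`-orthogonal to all such polynomials. -/
def IsL2Proj (E : Set Plane) (m : ℕ) (f Pf : Plane → ℝ) : Prop :=
  IsPolyDeg m Pf ∧ ∀ g : Plane → ℝ, IsPolyDeg m g → ∫ x in E, (f x - Pf x) * g x = 0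

/-- Componentwise `L²(E)`-projection for `ℝ²`-valued functions. -/
def IsL2ProjV (E : Set Plane) (m : ℕ) (f Pf : Plane → Plane) : Prop :=
  ∀ i : Fin 2, IsL2Proj E m (fun x => f x i) (fun x => Pf x i)

/-- `ℰ_m(f) = ‖f - Π⁰_m f‖_{L²(E)}` for a scalar function, where `Pf = Π⁰_m f`. -/
def errS (E : Set Plane) (f Pf : Plane → ℝ) : ℝ :=
  Real.sqrt (∫ x in E, (f x - Pf x) ^ 2)

/-- `ℰ_m(f) = ‖f - Π⁰_m f‖_{L²(E)}` for an `ℝ²`-valued function, where `Pf = Π⁰_m f`. -/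
def errV (E : Set Plane) (f Pf : Plane → Plane) : ℝ :=
  Real.sqrt (∫ x in E, ‖f x - Pf x‖ ^ 2)

/-- `L²(E)` norm of a scalar function. -/
def l2normS (E : Set Plane) (f : Plane → ℝ) : ℝ :=
  Real.sqrt (∫ x in E, (f x) ^ 2)

/-- `L²(E)` norm of an `ℝ²`-valued function. -/
def l2normV (E : Set Plane) (f : Plane → Plane) : ℝ :=
  Real.sqrt (∫ x in E, ‖f x‖ ^ 2)

/-! Write `a = p - Π p`, `b = q - Π q` and `A = μp - Π(μp)`, `B = μq - Π(μq)`. Since `b ⊥ Π(μp)` and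
`a ⊥ Π(μq)`, the consistency error splits as
`(μp, q) - (μ Π p, Π q) = (A, b) + (a, B) - (μ a, b)`,
and each of the three terms is bounded by Cauchy–Schwarz. -/

section

variable {α : Type*} [MeasurableSpace α] {ν : Measure α}

theorem integral_abs_mul_abs_le_sqrt_mul_sqrt {u v : α → ℝ} (hu : MemLp u 2 ν) (hv : MemLp v 2 ν) :
    ∫ x, |u x| * |v x| ∂ν ≤ √(∫ x, u x ^ 2 ∂ν) * √(∫ x, v x ^ 2 ∂ν) := by
  have hrpow : ∀ t : ℝ, |t| ^ (2 : ℝ) = t ^ 2 := fun t => by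
    rw [Real.rpow_two, sq_abs]
  have h2 : ENNReal.ofReal 2 = 2 := by norm_num
  have holder := integral_mul_le_Lp_mul_Lq_of_nonneg Real.HolderConjugate.two_two
    (Filter.Eventually.of_forall fun x => abs_nonneg (u x))
    (Filter.Eventually.of_forall fun x => abs_nonneg (v x))
    (by rw [h2]; exact hu.abs) (by rw [h2]; exact hv.abs)
  simpa only [hrpow, Real.sqrt_eq_rpow] using holder

theorem integral_mul_le_sqrt_mul_sqrt {u v : α → ℝ} (hu : MemLp u 2 ν) (hv : MemLp v 2 ν) :
    ∫ x, u x * v x ∂ν ≤ √(∫ x, u x ^ 2 ∂ν) * √(∫ x, v x ^ 2 ∂ν) := by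
  refine le_trans ?_ (integral_abs_mul_abs_le_sqrt_mul_sqrt hu hv)
  refine integral_mono (hu.integrable_mul hv) ?_ fun x => by
    simpa [abs_mul] using le_abs_self (u x * v x)
  simpa only [Pi.mul_apply, abs_mul] using (hu.integrable_mul hv).abs

theorem MeasureTheory.MemLp.mul_of_ae_abs_le {p : ENNReal} {w f : α → ℝ} {C : ℝ}
    (hw : AEStronglyMeasurable w ν) (hwC : ∀ᵐ x ∂ν, |w x| ≤ C) (hf : MemLp f p ν) :
    MemLp (fun x => w x * f x) p ν :=
  hf.mul' (memLp_top_of_bound hw C hwC)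

theorem abs_integral_mul_mul_le_of_ae_abs_le {w u v : α → ℝ} {C : ℝ}
    (hw : AEStronglyMeasurable w ν) (hwC : ∀ᵐ x ∂ν, |w x| ≤ C)
    (hu : MemLp u 2 ν) (hv : MemLp v 2 ν) :
    |∫ x, w x * u x * v x ∂ν| ≤ C * √(∫ x, u x ^ 2 ∂ν) * √(∫ x, v x ^ 2 ∂ν) := by
  rcases eq_or_ne ν 0 with rfl | hν
  · simp
  have hC : 0 ≤ C := by
    have := ae_neBot.mpr hν
    obtain ⟨x, hx⟩ := hwC.exists
    exact (abs_nonneg _).trans hx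
  have huv : Integrable (fun x => |u x| * |v x|) ν := by
    simpa only [Pi.mul_apply, abs_mul] using (hu.integrable_mul hv).abs
  calc |∫ x, w x * u x * v x ∂ν|
      ≤ ∫ x, |w x * u x * v x| ∂ν := abs_integral_le_integral_abs
    _ ≤ ∫ x, C * (|u x| * |v x|) ∂ν := by
        refine integral_mono_ae ((hu.mul_of_ae_abs_le hw hwC).integrable_mul hv).abs
          (huv.const_mul C) ?_
        filter_upwards [hwC] with x hx
        rw [abs_mul, abs_mul, mul_assoc]
        gcongr
    _ ≤ C * (√(∫ x, u x ^ 2 ∂ν) * √(∫ x, v x ^ 2 ∂ν)) := by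
        rw [integral_const_mul]
        exact mul_le_mul_of_nonneg_left (integral_abs_mul_abs_le_sqrt_mul_sqrt hu hv) hC
    _ = C * √(∫ x, u x ^ 2 ∂ν) * √(∫ x, v x ^ 2 ∂ν) := (mul_assoc _ _ _).symm

variable {μ p q Pp Pq Pμp Pμq : α → ℝ} {C : ℝ}

theorem integral_mul_mul_sub_integral_mul_mul_eq
    (hμ : AEStronglyMeasurable μ ν) (hμC : ∀ᵐ x ∂ν, |μ x| ≤ C)
    (hp : MemLp p 2 ν) (hq : MemLp q 2 ν) (hPp : MemLp Pp 2 ν) (hPq : MemLp Pq 2 ν)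
    (hPμp : MemLp Pμp 2 ν) (hPμq : MemLp Pμq 2 ν)
    (hqPμp : ∫ x, (q x - Pq x) * Pμp x ∂ν = 0) (hpPμq : ∫ x, (p x - Pp x) * Pμq x ∂ν = 0) :
    (∫ x, μ x * p x * q x ∂ν) - ∫ x, μ x * Pp x * Pq x ∂ν =
      (∫ x, (μ x * p x - Pμp x) * (q x - Pq x) ∂ν) + (∫ x, (μ x * q x - Pμq x) * (p x - Pp x) ∂ν)
        - ∫ x, μ x * (p x - Pp x) * (q x - Pq x) ∂ν := by
  have ha : MemLp (fun x => p x - Pp x) 2 ν := hp.sub hPp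
  have hb : MemLp (fun x => q x - Pq x) 2 ν := hq.sub hPq
  have hμp := hp.mul_of_ae_abs_le hμ hμC
  have hμq := hq.mul_of_ae_abs_le hμ hμC
  have h1 : Integrable (fun x => μ x * p x * q x) ν := hμp.integrable_mul hq
  have h2 : Integrable (fun x => μ x * Pp x * Pq x) ν :=
    (hPp.mul_of_ae_abs_le hμ hμC).integrable_mul hPq
  have e1 : Integrable (fun x => (μ x * p x - Pμp x) * (q x - Pq x)) ν :=
    (hμp.sub hPμp).integrable_mul hb
  have e2 : Integrable (fun x => (μ x * q x - Pμq x) * (p x - Pp x)) ν :=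
    (hμq.sub hPμq).integrable_mul ha
  have e3 : Integrable (fun x => μ x * (p x - Pp x) * (q x - Pq x)) ν :=
    (ha.mul_of_ae_abs_le hμ hμC).integrable_mul hb
  have e4 : Integrable (fun x => (q x - Pq x) * Pμp x) ν := hb.integrable_mul hPμp
  have e5 : Integrable (fun x => (p x - Pp x) * Pμq x) ν := ha.integrable_mul hPμq
  have e12 : Integrable (fun x => (μ x * p x - Pμp x) * (q x - Pq x)
      + (μ x * q x - Pμq x) * (p x - Pp x)) ν := e1.add e2
  have e123 : Integrable (fun x => (μ x * p x - Pμp x) * (q x - Pq x)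
      + (μ x * q x - Pμq x) * (p x - Pp x) - μ x * (p x - Pp x) * (q x - Pq x)) ν := e12.sub e3
  have e45 : Integrable (fun x => (q x - Pq x) * Pμp x + (p x - Pp x) * Pμq x) ν := e4.add e5
  calc (∫ x, μ x * p x * q x ∂ν) - ∫ x, μ x * Pp x * Pq x ∂ν
      = ∫ x, μ x * p x * q x - μ x * Pp x * Pq x ∂ν := (integral_sub h1 h2).symm
    _ = ∫ x, ((μ x * p x - Pμp x) * (q x - Pq x) + (μ x * q x - Pμq x) * (p x - Pp x)
          - μ x * (p x - Pp x) * (q x - Pq x))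
          + ((q x - Pq x) * Pμp x + (p x - Pp x) * Pμq x) ∂ν := by
        congr 1; funext x; ring
    _ = (∫ x, (μ x * p x - Pμp x) * (q x - Pq x) ∂ν)
          + (∫ x, (μ x * q x - Pμq x) * (p x - Pp x) ∂ν)
          - ∫ x, μ x * (p x - Pp x) * (q x - Pq x) ∂ν := by
        rw [integral_add e123 e45, integral_add e4 e5, hqPμp, hpPμq, add_zero, add_zero,
          integral_sub e12 e3, integral_add e1 e2]

theorem integral_mul_mul_sub_integral_mul_mul_le
    (hμ : AEStronglyMeasurable μ ν) (hμC : ∀ᵐ x ∂ν, |μ x| ≤ C)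
    (hp : MemLp p 2 ν) (hq : MemLp q 2 ν) (hPp : MemLp Pp 2 ν) (hPq : MemLp Pq 2 ν)
    (hPμp : MemLp Pμp 2 ν) (hPμq : MemLp Pμq 2 ν)
    (hqPμp : ∫ x, (q x - Pq x) * Pμp x ∂ν = 0) (hpPμq : ∫ x, (p x - Pp x) * Pμq x ∂ν = 0) :
    (∫ x, μ x * p x * q x ∂ν) - ∫ x, μ x * Pp x * Pq x ∂ν ≤
      √(∫ x, (μ x * p x - Pμp x) ^ 2 ∂ν) * √(∫ x, (q x - Pq x) ^ 2 ∂ν)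
        + √(∫ x, (μ x * q x - Pμq x) ^ 2 ∂ν) * √(∫ x, (p x - Pp x) ^ 2 ∂ν)
        + C * √(∫ x, (p x - Pp x) ^ 2 ∂ν) * √(∫ x, (q x - Pq x) ^ 2 ∂ν) := by
  have ha : MemLp (fun x => p x - Pp x) 2 ν := hp.sub hPp
  have hb : MemLp (fun x => q x - Pq x) 2 ν := hq.sub hPq
  have hA : MemLp (fun x => μ x * p x - Pμp x) 2 ν := (hp.mul_of_ae_abs_le hμ hμC).sub hPμp
  have hB : MemLp (fun x => μ x * q x - Pμq x) 2 ν := (hq.mul_of_ae_abs_le hμ hμC).sub hPμq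
  rw [integral_mul_mul_sub_integral_mul_mul_eq hμ hμC hp hq hPp hPq hPμp hPμq hqPμp hpPμq]
  have hAb := integral_mul_le_sqrt_mul_sqrt hA hb
  have hBa := integral_mul_le_sqrt_mul_sqrt hB ha
  have hμab := (neg_le_abs _).trans (abs_integral_mul_mul_le_of_ae_abs_le hμ hμC ha hb)
  linarith

end

theorem Continuous.memLp_restrict_of_isBounded {X F : Type*} [PseudoMetricSpace X] [ProperSpace X]
    [MeasurableSpace X] [OpensMeasurableSpace X] {ν : Measure X} [IsFiniteMeasureOnCompacts ν]
    [NormedAddCommGroup F] {f : X → F} (hf : Continuous f) {s : Set X}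
    (hs : Bornology.IsBounded s) (r : ENNReal) : MemLp f r (ν.restrict s) := by
  have hK : IsCompact (closure s) := hs.isCompact_closure
  have : IsFiniteMeasure (ν.restrict (closure s)) :=
    ⟨by simpa only [Measure.restrict_apply_univ] using hK.measure_lt_top⟩
  obtain ⟨C, hC⟩ := hK.exists_bound_of_continuousOn hf.continuousOn
  have hbound : MemLp f r (ν.restrict (closure s)) := .of_bound hf.aestronglyMeasurable C
    (ae_restrict_of_forall_mem isClosed_closure.measurableSet hC)
  exact hbound.mono_measure (Measure.restrict_mono subset_closure le_rfl)

theorem IsPolyDeg.continuous {m : ℕ} {g : Plane → ℝ} (hg : IsPolyDeg m g) : Continuous g := by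
  obtain ⟨P, -, hP⟩ := hg
  rw [funext hP]
  exact (MvPolynomial.continuous_eval P).comp (by fun_prop)

theorem statement0_general
    (E : Set Plane) (hEbdd : Bornology.IsBounded E)
    (μ : Plane → ℝ) (Cμ : ℝ) (hμmeas : Measurable μ)
    (hμbdd : ∀ᵐ x ∂(volume.restrict E), |μ x| ≤ Cμ)
    (k : ℕ)
    (p q : Plane → ℝ)
    (hp : MemLp p 2 (volume.restrict E)) (hq : MemLp q 2 (volume.restrict E))
    (Pp Pq Pμp Pμq : Plane → ℝ)
    (hPp : IsL2Proj E k p Pp) (hPq : IsL2Proj E k q Pq)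
    (hPμp : IsL2Proj E k (fun x => μ x * p x) Pμp)
    (hPμq : IsL2Proj E k (fun x => μ x * q x) Pμq) :
    (∫ x in E, μ x * p x * q x) - (∫ x in E, μ x * Pp x * Pq x) ≤
      errS E (fun x => μ x * p x) Pμp * errS E q Pq
        + errS E (fun x => μ x * q x) Pμq * errS E p Pp
        + Cμ * errS E p Pp * errS E q Pq := by
  have memLp_of_isPolyDeg {g : Plane → ℝ} (hg : IsPolyDeg k g) : MemLp g 2 (volume.restrict E) :=
    hg.continuous.memLp_restrict_of_isBounded hEbdd 2
  exact integral_mul_mul_sub_integral_mul_mul_le hμmeas.aestronglyMeasurable hμbdd hp hq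
    (memLp_of_isPolyDeg hPp.1) (memLp_of_isPolyDeg hPq.1)
    (memLp_of_isPolyDeg hPμp.1) (memLp_of_isPolyDeg hPμq.1)
    (hPq.2 Pμp hPμp.1) (hPp.2 Pμq hPμq.1)

/-- Lemma 5.3 of the paper: for a bounded measurable `μ` with
essential sup norm at most `Cμ` on `E`, and `p, q ∈ L²(E)`,
`(μp, q) − (μ Π⁰_k p, Π⁰_k q) ≤ ℰ_k(μp)ℰ_k(q) + ℰ_k(μq)ℰ_k(p) + Cμ ℰ_k(p)ℰ_k(q)`. -/
theorem statement0
    (E : Set Plane) (hEopen : IsOpen E) (hEbdd : Bornology.IsBounded E)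
    (hEpos : 0 < volume E)
    (μ : Plane → ℝ) (Cμ : ℝ) (hμmeas : Measurable μ)
    (hμbdd : ∀ᵐ x ∂(volume.restrict E), |μ x| ≤ Cμ)
    (k : ℕ)
    (p q : Plane → ℝ)
    (hp : MemLp p 2 (volume.restrict E)) (hq : MemLp q 2 (volume.restrict E))
    (Pp Pq Pμp Pμq : Plane → ℝ)
    (hPp : IsL2Proj E k p Pp) (hPq : IsL2Proj E k q Pq)
    (hPμp : IsL2Proj E k (fun x => μ x * p x) Pμp)
    (hPμq : IsL2Proj E k (fun x => μ x * q x) Pμq) :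
    (∫ x in E, μ x * p x * q x) - (∫ x in E, μ x * Pp x * Pq x) ≤
      errS E (fun x => μ x * p x) Pμp * errS E q Pq
        + errS E (fun x => μ x * q x) Pμq * errS E p Pp
        + Cμ * errS E p Pp * errS E q Pq :=
  statement0_general E hEbdd μ Cμ hμmeas hμbdd k p q hp hq Pp Pq Pμp Pμq hPp hPq hPμp hPμq
end
end

section
/- Let k ≥ 1 be an integer and let q be a real polynomial in one variable of degree at most k with q(0) = 0 and q(1) = 0, such that ∫₀¹ q(x) p(x) dx = 0 for every real polynomial p of degree at most k − 2 (this condition is vacuous for k = 1). Then q is the zero polynomial. -/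
/-!
Write `q = X (X - 1) r` using the two roots, so that `deg r ≤ k - 2`. Testing the moment
condition against `p = r` gives `∫₀¹ x (x - 1) r(x)² dx = 0`, whose integrand has constant
sign on `[0, 1]`; hence `x (x - 1) r(x)²` vanishes on `[0, 1]`, so `r = 0`.
-/

open intervalIntegral

namespace Polynomial

theorem mul_X_sub_C_dvd_of_isRoot {K : Type*} [Field K] {p : K[X]} {a b : K} (hab : a ≠ b)
    (ha : p.IsRoot a) (hb : p.IsRoot b) : (X - C a) * (X - C b) ∣ p :=
  (isCoprime_X_sub_C_of_isUnit_sub (sub_ne_zero.mpr hab).isUnit).mul_dvd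
    (dvd_iff_isRoot.mpr ha) (dvd_iff_isRoot.mpr hb)

theorem eq_zero_of_integral_eq_zero_of_nonneg {p : ℝ[X]} {a b : ℝ} (hab : a < b)
    (hnonneg : ∀ x ∈ Set.Ioc a b, 0 ≤ p.eval x) (hint : ∫ x in a..b, p.eval x = 0) :
    p = 0 := by
  by_contra hp
  obtain ⟨c, hc, hc_root⟩ : ∃ c ∈ Set.Ioc a b, ¬ p.IsRoot c :=
    ((Set.Ioc_infinite hab).sdiff (p.finite_setOfPred_isRoot hp)).nonempty
  have hpos : 0 < ∫ x in a..b, p.eval x :=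
    integral_pos hab p.continuous.continuousOn hnonneg
      ⟨c, Set.Ioc_subset_Icc_self hc, (hnonneg c hc).lt_of_ne' hc_root⟩
  exact hpos.ne' hint

end Polynomial

open Polynomial

theorem statement8_general
    (k : ℕ) (q : Polynomial ℝ)
    (hdeg : q.natDegree ≤ k)
    (h0 : q.eval 0 = 0) (h1 : q.eval 1 = 0)
    (hmom : ∀ p : Polynomial ℝ, (p.natDegree : ℤ) ≤ (k : ℤ) - 2 →
      ∫ x in (0 : ℝ)..1, q.eval x * p.eval x = 0) :
    q = 0 := by
  obtain ⟨r, rfl⟩ := mul_X_sub_C_dvd_of_isRoot zero_ne_one h0 h1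
  rcases eq_or_ne r 0 with rfl | hr
  · exact mul_zero _
  have hdeg_r : (r.natDegree : ℤ) ≤ (k : ℤ) - 2 := by
    rw [Monic.natDegree_mul' ((monic_X_sub_C 0).mul (monic_X_sub_C 1)) hr,
      (monic_X_sub_C 0).natDegree_mul (monic_X_sub_C 1), natDegree_X_sub_C,
      natDegree_X_sub_C] at hdeg
    omega
  have hqr : -((X - C 0) * (X - C 1) * r * r) = 0 := by
    refine eq_zero_of_integral_eq_zero_of_nonneg zero_lt_one (fun x hx ↦ ?_) ?_
    · have : 0 ≤ x * (1 - x) * (r.eval x * r.eval x) :=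
        mul_nonneg (mul_nonneg hx.1.le (sub_nonneg.mpr hx.2)) (mul_self_nonneg _)
      simp only [eval_neg, eval_mul, eval_sub, eval_X, eval_C]
      linarith
    · simpa [mul_assoc] using hmom r hdeg_r
  simpa [mul_assoc, hr] using hqr

/-- edge unisolvence underlying the VEM degrees of freedom: a real
univariate polynomial `q` of degree at most `k` with `q(0) = q(1) = 0` whose moments
`∫₀¹ q p` vanish against every polynomial `p` of degree at most `k − 2` is the zero
polynomial.  (The moment condition is vacuous for `k = 1`.) -/
theorem statement8
    (k : ℕ) (hk : 1 ≤ k) (q : Polynomial ℝ)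
    (hdeg : q.natDegree ≤ k)
    (h0 : q.eval 0 = 0) (h1 : q.eval 1 = 0)
    (hmom : ∀ p : Polynomial ℝ, (p.natDegree : ℤ) ≤ (k : ℤ) - 2 →
      ∫ x in (0 : ℝ)..1, q.eval x * p.eval x = 0) :
    q = 0 :=
  statement8_general k q hdeg h0 h1 hmom
end
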